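/- Let (u, τ, S) be a C¹ classical solution of the compressible Euler equations on ℝ × [0,T). Then at every point of ℝ × [0,T): ∂₊η = −K_c η^{(γ+1)/(γ−1)} ( β̃ + ((γ−1)/γ) η m_x ) and ∂₋η = −K_c η^{(γ+1)/(γ−1)} ( α̃ − ((γ−1)/γ) η m_x ). -/
import Mathlib


noncomputable section

open Real Set MeasureTheory
open scoped ENNReal

/-- The time domain `[0, T)`, where `T ∈ (0, ∞]` may be infinite. -/
def Tset (T : ℝ≥0∞) : Set ℝ := {t : ℝ | 0 ≤ t ∧ ENNReal.ofReal t < T}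

/-- `m(x) = exp (S x / (2 c_v))`. -/
def mFun (cv : ℝ) (S : ℝ → ℝ) (x : ℝ) : ℝ := Real.exp (S x / (2 * cv))

/-- `η = (2√(Kγ)/(γ−1)) τ^{−(γ−1)/2}`. -/
def etaFun (K γ : ℝ) (τ : ℝ → ℝ → ℝ) (x t : ℝ) : ℝ :=
  2 * Real.sqrt (K * γ) / (γ - 1) * τ x t ^ (-(γ - 1) / 2)

/-- pressure `p = K e^{S/c_v} τ^{−γ}`. -/
def pFun (K cv γ : ℝ) (S : ℝ → ℝ) (τ : ℝ → ℝ → ℝ) (x t : ℝ) : ℝ :=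
  K * Real.exp (S x / cv) * τ x t ^ (-γ)

/-- `K_τ = (2√(Kγ)/(γ−1))^{2/(γ−1)}`. -/
def Ktau (K γ : ℝ) : ℝ := (2 * Real.sqrt (K * γ) / (γ - 1)) ^ (2 / (γ - 1))

/-- `K_c = √(Kγ) K_τ^{−(γ+1)/2}`. -/
def KcConst (K γ : ℝ) : ℝ := Real.sqrt (K * γ) * Ktau K γ ^ (-(γ + 1) / 2)

/-- wave speed `c = K_c m η^{(γ+1)/(γ−1)}`. -/
def cFun (K cv γ : ℝ) (S : ℝ → ℝ) (τ : ℝ → ℝ → ℝ) (x t : ℝ) : ℝ :=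
  KcConst K γ * mFun cv S x * etaFun K γ τ x t ^ ((γ + 1) / (γ - 1))

/-- gradient variable `α̃ = u_x + m η_x + ((γ−1)/γ) m_x η`. -/
def alphaT (K cv γ : ℝ) (S : ℝ → ℝ) (u τ : ℝ → ℝ → ℝ) (x t : ℝ) : ℝ :=
  deriv (fun x' => u x' t) x + mFun cv S x * deriv (fun x' => etaFun K γ τ x' t) x
    + (γ - 1) / γ * deriv (mFun cv S) x * etaFun K γ τ x t

/-- gradient variable `β̃ = u_x − m η_x − ((γ−1)/γ) m_x η`. -/
def betaT (K cv γ : ℝ) (S : ℝ → ℝ) (u τ : ℝ → ℝ → ℝ) (x t : ℝ) : ℝ :=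
  deriv (fun x' => u x' t) x - mFun cv S x * deriv (fun x' => etaFun K γ τ x' t) x
    - (γ - 1) / γ * deriv (mFun cv S) x * etaFun K γ τ x t

/-- A classical solution of the compressible Euler equations on `ℝ × [0,T)`:
`τ > 0`, `τ_t = u_x` and `u_t = −p_x` pointwise (the entropy `S = S(x)` is
time-independent by fiat, which encodes `S_t = 0`). -/
def IsEulerSol (K cv γ : ℝ) (T : ℝ≥0∞) (u τ : ℝ → ℝ → ℝ) (S : ℝ → ℝ) : Prop :=
  (∀ x : ℝ, ∀ t ∈ Tset T, 0 < τ x t) ∧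
  (∀ x : ℝ, ∀ t ∈ Tset T,
    HasDerivWithinAt (fun t' => τ x t') (deriv (fun x' => u x' t) x) (Tset T) t) ∧
  (∀ x : ℝ, ∀ t ∈ Tset T,
    HasDerivWithinAt (fun t' => u x t')
      (-(deriv (fun x' => pFun K cv γ S τ x' t) x)) (Tset T) t)

/-- `C^k` regularity of the solution on `ℝ × [0,T)`. -/
def IsCkSol (k : ℕ) (T : ℝ≥0∞) (u τ : ℝ → ℝ → ℝ) (S : ℝ → ℝ) : Prop :=
  ContDiffOn ℝ k (fun q : ℝ × ℝ => u q.1 q.2) ((Set.univ : Set ℝ) ×ˢ Tset T) ∧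
  ContDiffOn ℝ k (fun q : ℝ × ℝ => τ q.1 q.2) ((Set.univ : Set ℝ) ×ˢ Tset T) ∧
  ContDiff ℝ k S

/-- `M* = 4 M_η M_D · max{2(γ−1)/γ, ((3γ−1)/(γ+1))·(4/γ)}`. -/
def Mstar (γ Mη MD : ℝ) : ℝ :=
  4 * Mη * MD * max (2 * (γ - 1) / γ) ((3 * γ - 1) / (γ + 1) * (4 / γ))

/-- `λ = (1/(4M_η))·((γ+1)/(3γ−1))·M*`. -/
def lamConst (γ Mη MD : ℝ) : ℝ :=
  1 / (4 * Mη) * ((γ + 1) / (3 * γ - 1)) * Mstar γ Mη MD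

/-- transformed gradient variable `α = α̃ + λ η`. -/
def alphaV (K cv γ lam : ℝ) (S : ℝ → ℝ) (u τ : ℝ → ℝ → ℝ) (x t : ℝ) : ℝ :=
  alphaT K cv γ S u τ x t + lam * etaFun K γ τ x t

/-- transformed gradient variable `β = β̃ + λ η`. -/
def betaV (K cv γ lam : ℝ) (S : ℝ → ℝ) (u τ : ℝ → ℝ → ℝ) (x t : ℝ) : ℝ :=
  betaT K cv γ S u τ x t + lam * etaFun K γ τ x t


lemma uniqueDiffOn_Tset {T : ℝ≥0∞} (hT : 0 < T) : UniqueDiffOn ℝ (Tset T) := by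
  rcases eq_or_ne T ⊤ with h | h
  · have hs : Tset T = Set.Ici (0:ℝ) := by
      ext t; simp [Tset, h]
    rw [hs]; exact uniqueDiffOn_Ici 0
  · have hs : Tset T = Set.Ico (0:ℝ) T.toReal := by
      ext t
      simp only [Tset, Set.mem_setOf_eq, Set.mem_Ico]
      exact and_congr_right fun h0 => ENNReal.ofReal_lt_iff_lt_toReal h0 h
    rw [hs]
    exact uniqueDiffOn_Ico 0 T.toReal

/-- for a `C¹` classical solution,
`∂₊η = −K_c η^{(γ+1)/(γ−1)} (β̃ + ((γ−1)/γ) η m_x)` and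
`∂₋η = −K_c η^{(γ+1)/(γ−1)} (α̃ − ((γ−1)/γ) η m_x)`. -/
theorem eta_characteristic_derivatives
    (K cv γ : ℝ) (hK : 0 < K) (hcv : 0 < cv) (hγ : 1 < γ)
    (T : ℝ≥0∞) (hT : 0 < T)
    (u τ : ℝ → ℝ → ℝ) (S : ℝ → ℝ)
    (hsol : IsEulerSol K cv γ T u τ S)
    (hreg : IsCkSol 1 T u τ S) :
    ∀ x : ℝ, ∀ t ∈ Tset T,
      (derivWithin (fun t' => etaFun K γ τ x t') (Tset T) t
          + cFun K cv γ S τ x t * deriv (fun x' => etaFun K γ τ x' t) x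
        = -(KcConst K γ) * etaFun K γ τ x t ^ ((γ + 1) / (γ - 1))
            * (betaT K cv γ S u τ x t
                + (γ - 1) / γ * etaFun K γ τ x t * deriv (mFun cv S) x)) ∧
      (derivWithin (fun t' => etaFun K γ τ x t') (Tset T) t
          - cFun K cv γ S τ x t * deriv (fun x' => etaFun K γ τ x' t) x
        = -(KcConst K γ) * etaFun K γ τ x t ^ ((γ + 1) / (γ - 1))
            * (alphaT K cv γ S u τ x t
                - (γ - 1) / γ * etaFun K γ τ x t * deriv (mFun cv S) x)) := by
  intro x t ht
  obtain ⟨hτpos, hτt, -⟩ := hsol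
  have hτ0 : 0 < τ x t := hτpos x t ht
  have hγ1 : (0:ℝ) < γ - 1 := by linarith
  have hKγ : (0:ℝ) < K * γ := by positivity
  have hs : 0 < Real.sqrt (K * γ) := Real.sqrt_pos.mpr hKγ
  set A : ℝ := 2 * Real.sqrt (K * γ) / (γ - 1) with hA
  have hApos : 0 < A := by positivity
  set e : ℝ := -(γ - 1) / 2 with he
  set p : ℝ := (γ + 1) / (γ - 1) with hp
  set ux : ℝ := deriv (fun x' => u x' t) x with hux
  have hη : HasDerivWithinAt (fun t' => etaFun K γ τ x t')
      (A * (ux * e * τ x t ^ (e - 1))) (Tset T) t := by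
    have h1 : (fun t' => etaFun K γ τ x t') = fun t' => A * τ x t' ^ e := rfl
    rw [h1]
    exact ((hτt x t ht).rpow_const (Or.inl hτ0.ne')).const_mul A
  have hderiv : derivWithin (fun t' => etaFun K γ τ x t') (Tset T) t
      = A * (ux * e * τ x t ^ (e - 1)) :=
    hη.derivWithin (uniqueDiffOn_Tset hT t ht)
  have hrpow : etaFun K γ τ x t ^ p = A ^ p * τ x t ^ (e - 1) := by
    have h1 : etaFun K γ τ x t = A * τ x t ^ e := rfl
    have hep : e * p = e - 1 := by
      rw [he, hp]
      have hne : γ - 1 ≠ 0 := hγ1.ne'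
      field_simp
      ring
    rw [h1, Real.mul_rpow hApos.le (Real.rpow_nonneg hτ0.le _),
      ← Real.rpow_mul hτ0.le, hep]
  have hKcA : KcConst K γ * A ^ p = Real.sqrt (K * γ) := by
    have h2 : Ktau K γ = A ^ (2 / (γ - 1)) := rfl
    have h3 : (Ktau K γ) ^ (-(γ + 1) / 2) = A ^ (-p) := by
      rw [h2, ← Real.rpow_mul hApos.le]
      have hexp : 2 / (γ - 1) * (-(γ + 1) / 2) = -p := by
        rw [hp]
        have hne : γ - 1 ≠ 0 := hγ1.ne'
        field_simp
      rw [hexp]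
    rw [KcConst, h3, mul_assoc, ← Real.rpow_add hApos, neg_add_cancel,
      Real.rpow_zero, mul_one]
  have key : A * (ux * e * τ x t ^ (e - 1))
      = -(KcConst K γ) * etaFun K γ τ x t ^ p * ux := by
    rw [hrpow]
    have hAe : A * e = -Real.sqrt (K * γ) := by
      have hne : γ - 1 ≠ 0 := hγ1.ne'
      rw [hA, he]; field_simp
    have : -(KcConst K γ) * (A ^ p * τ x t ^ (e - 1)) * ux
        = -(KcConst K γ * A ^ p) * τ x t ^ (e - 1) * ux := by ring
    rw [this, hKcA]
    have : A * (ux * e * τ x t ^ (e - 1)) = (A * e) * τ x t ^ (e - 1) * ux := by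
      ring
    rw [this, hAe]
  rw [hderiv, key] at *
  constructor
  · simp only [cFun, betaT, ← hux, ← hp]
    ring
  · simp only [cFun, alphaT, ← hux, ← hp]
    ring
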